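/- arXiv:2010.05165 — 8 statements merged into one kernel-verified Lean document; each statement's English description precedes it below -/
import Mathlib

section
/- Neither 01010 nor 10101 occurs as a factor (contiguous subword) of the Thue–Morse word M_n, for any n. -/
/-- A block of `a` ones. -/
def ones (a : ℕ) : List Bool := List.replicate a true

/-- Words over {0,1} that begin and end with 0 (false = 0, true = 1). -/
def InF (v : List Bool) : Prop := v.head? = some false ∧ v.getLast? = some false

/-- `w` is a prefix of the infinite word `V`. -/
def PrefixOf (w : List Bool) (V : ℕ → Bool) : Prop :=
  ∀ i, i < w.length → w.getD i false = V i

/-- Finite stages `v 1^{a 0} v 1^{a 1} v ⋯ v`. -/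
def stage (v : List Bool) (a : ℕ → ℕ) : ℕ → List Bool
  | 0 => v
  | n + 1 => stage v a n ++ ones (a n) ++ v

/-- The infinite word `V` is built from `v`: `V = v 1^{a₁} v 1^{a₂} v ⋯`. -/
def BuiltFrom (V : ℕ → Bool) (v : List Bool) : Prop :=
  ∃ a : ℕ → ℕ, ∀ n, PrefixOf (stage v a n) V

/-- A finite word `w` is built from `v`: `w = v 1^{a₁} v ⋯ v 1^{a_k} v`, `k ≥ 1`. -/
def FBuiltFrom (w v : List Bool) : Prop :=
  ∃ a : List ℕ, a ≠ [] ∧ w = v ++ (a.map fun n => ones n ++ v).flatten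

/-- `A_V`, the set of words in `𝓕` from which `V` is built. -/
def AV (V : ℕ → Bool) : Set (List Bool) := {v | InF v ∧ BuiltFrom V v}

/-- `w` occurs in the infinite word `V` at position `k`. -/
def OccursAt (w : List Bool) (V : ℕ → Bool) (k : ℕ) : Prop :=
  ∀ i, i < w.length → w.getD i false = V (k + i)

/-- `w` is a factor (contiguous subword) of the infinite word `V`. -/
def FactorOfN (w : List Bool) (V : ℕ → Bool) : Prop := ∃ k, OccursAt w V k

/-- `w` occurs in the bi-infinite word `x` at position `k`. -/
def OccursAtZ (w : List Bool) (x : ℤ → Bool) (k : ℤ) : Prop :=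
  ∀ i, i < w.length → w.getD i false = x (k + (i : ℤ))

/-- `w` is a factor of the bi-infinite word `x`. -/
def FactorOfZ (w : List Bool) (x : ℤ → Bool) : Prop := ∃ k, OccursAtZ w x k

/-- The subshift associated to an infinite word `V`. -/
def Subshift (V : ℕ → Bool) : Set (ℤ → Bool) :=
  {x | ∀ w, FactorOfZ w x → FactorOfN w V}

/-- Thue–Morse words: `M 0 = 0`, `M (n+1) = M n ++ complement (M n)`. -/
def M : ℕ → List Bool
  | 0 => [false]
  | n + 1 => M n ++ (M n).map (fun b => !b)

/-- The Thue–Morse sequence: parity of the number of 1's in binary expansion. -/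
def tm (n : ℕ) : Bool := decide (((Nat.digits 2 n).count 1) % 2 = 1)

/-- Rank-two towers for the Thue–Morse sequence. -/
def M2 : ℕ → List Bool × List Bool
  | 0 => ([false], [false])
  | n + 1 =>
    if n % 2 = 1 then ((M2 n).1 ++ [true] ++ (M2 n).2, (M2 n).2 ++ [true] ++ (M2 n).1)
    else ((M2 n).1 ++ [true, true] ++ (M2 n).2, (M2 n).2 ++ (M2 n).1)

/-!
Write `M̄ n` for the complement of `M n`. A factor of length five of `M (n+1) = M n ++ M̄ n` lies
in `M n`, in `M̄ n`, or in the junction formed by the last four letters of `M n` and the first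
four of `M̄ n`. The first two cases are excluded by induction, since `01010` and `10101` are
complements of each other. For `n ≥ 2`, `M n` begins with `M 2 = 0110` and ends with `0110` or
`1001`, so the junction is `01101001` or `10011001`, and neither contains a pattern.
-/

theorem Function.Involutive.infix_map_iff {α : Type*} {f : α → α} (hf : Function.Involutive f)
    {w l : List α} : w <:+: l.map f ↔ w.map f <:+: l := by
  constructor <;> intro h <;> simpa [List.map_map, hf.comp_self] using h.map f

theorem List.IsInfix.of_append_of_length_le {α : Type*} {w s t p q : List α}
    (h : w <:+: s ++ t) (hp : p <:+ s) (hq : q <+: t) (hwp : w.length ≤ p.length + 1)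
    (hwq : w.length ≤ q.length + 1) : w <:+: s ∨ w <:+: t ∨ w <:+: p ++ q := by
  rcases infix_append_iff_ne_nil.mp h with h | h | ⟨l₁, l₂, h₁, h₂, rfl, hs, ht⟩
  · exact .inl h
  · exact .inr (.inl h)
  · have := length_pos_iff.mpr h₁
    have := length_pos_iff.mpr h₂
    rw [length_append] at hwp hwq
    exact .inr (.inr (infix_append_iff.mpr (.inr (.inr ⟨l₁, l₂, rfl,
      suffix_of_suffix_length_le hs hp (by omega), prefix_of_prefix_length_le ht hq (by omega)⟩))))

theorem M_prefix_M {m n : ℕ} (h : m ≤ n) : M m <+: M n := by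
  induction n, h using Nat.le_induction with
  | base => exact List.prefix_refl _
  | succ n _ ih => exact ih.trans (List.prefix_append _ _)

theorem M_suffix_M_or_map_not {m n : ℕ} (h : m ≤ n) :
    M m <:+ M n ∨ (M m).map not <:+ M n := by
  induction n, h using Nat.le_induction with
  | base => exact .inl (List.suffix_refl _)
  | succ n _ ih =>
    rcases ih with ih | ih
    · exact .inr ((ih.map not).trans (List.suffix_append _ _))
    · have := (ih.map not).trans (List.suffix_append (M n) ((M n).map not))
      rw [List.map_map, Bool.involutive_not.comp_self, List.map_id] at this
      exact .inl this

theorem not_infix_M_succ {w : List Bool} {n : ℕ} (hn : 2 ≤ n) (hw : w.length ≤ 5)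
    (h₀ : ¬ w <:+: M 2 ++ (M 2).map not) (h₁ : ¬ w <:+: (M 2).map not ++ (M 2).map not)
    (h : ¬ w <:+: M n) (h' : ¬ w.map not <:+: M n) : ¬ w <:+: M (n + 1) := by
  intro hw'
  have hq : (M 2).map not <+: (M n).map not := (M_prefix_M hn).map not
  rcases M_suffix_M_or_map_not hn with hp | hp
  all_goals
    rcases hw'.of_append_of_length_le hp hq (hw.trans (by decide)) (hw.trans (by decide))
      with hl | hr | hj
    · exact h hl
    · exact h' (Bool.involutive_not.infix_map_iff.mp hr)
    · contradiction

theorem stmt2 : ∀ n, ¬ ([false, true, false, true, false] <:+: M n) ∧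
    ¬ ([true, false, true, false, true] <:+: M n) := by
  intro n
  induction n with
  | zero => decide
  | succ n ih =>
    obtain hn | hn := Nat.lt_or_ge n 2
    · interval_cases n <;> decide
    · exact ⟨not_infix_M_succ hn (by decide) (by decide) (by decide) ih.1 ih.2,
        not_infix_M_succ hn (by decide) (by decide) (by decide) ih.2 ih.1⟩
end

section
/- The Thue–Morse sequence is cube-free: for every nonempty finite word v, the word vvv does not occur as a factor of the Thue–Morse sequence. -/
/-! The identities `tm (2n) = tm n` and `tm (2n+1) = !tm n` rule out a factor `aaa`, and drive an
induction on the period `p` of a cube. If `p = 2q`, the even positions of the cube form a cube of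
period `q`. If `p = 2q + 1 ≥ 3`, comparing `tm (2m)` with `tm (2m + p) = !tm (m + q)` and
`tm (2m + 1) = !tm m` with `tm (2m + 1 + p) = tm (m + q + 1)` gives `tm (m + q) = tm (m + q + 1)` for two
consecutive values of `m`, hence a factor `aaa`. -/

lemma tm_two_mul (n : ℕ) : tm (2 * n) = tm n := by
  rcases Nat.eq_zero_or_pos n with rfl | _
  · rfl
  · unfold tm
    rw [Nat.digits_def' (by norm_num) (by omega)]
    simp

lemma tm_two_mul_add_one (n : ℕ) : tm (2 * n + 1) = !tm n := by
  unfold tm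
  rw [Nat.digits_def' (by norm_num) (by omega), show (2 * n + 1) % 2 = 1 by omega,
    show (2 * n + 1) / 2 = n by omega, List.count_cons_self]
  rcases Nat.even_or_odd ((Nat.digits 2 n).count 1) with h | h
  · simp [Nat.add_mod, Nat.even_iff.mp h]
  · simp [Nat.add_mod, Nat.odd_iff.mp h]

lemma tm_not_three_consecutive_eq (n : ℕ) :
    ¬ (tm n = tm (n + 1) ∧ tm (n + 1) = tm (n + 2)) := by
  rintro ⟨h₁, h₂⟩
  rcases Nat.even_or_odd' n with ⟨m, rfl | rfl⟩
  · rw [tm_two_mul, tm_two_mul_add_one] at h₁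
    simp at h₁
  · rw [show 2 * m + 1 + 1 = 2 * (m + 1) by omega, show 2 * m + 1 + 2 = 2 * (m + 1) + 1 by omega,
      tm_two_mul, tm_two_mul_add_one] at h₂
    simp at h₂

lemma tm_add_eq_tm_add_add_one_of_odd_shift {m q : ℕ} (h₀ : tm (2 * m) = tm (2 * m + (2 * q + 1)))
    (h₁ : tm (2 * m + 1) = tm (2 * m + 1 + (2 * q + 1))) : tm (m + q) = tm (m + q + 1) := by
  rw [show 2 * m + (2 * q + 1) = 2 * (m + q) + 1 by omega, tm_two_mul, tm_two_mul_add_one] at h₀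
  rw [show 2 * m + 1 + (2 * q + 1) = 2 * (m + q + 1) by omega, tm_two_mul,
    tm_two_mul_add_one] at h₁
  rw [← h₁, h₀, Bool.not_not]

def HasCubeAt {α : Type*} (x : ℕ → α) (p k : ℕ) : Prop :=
  ∀ i < 2 * p, x (k + i) = x (k + p + i)

lemma HasCubeAt.eq_add_period {α : Type*} {x : ℕ → α} {p k n : ℕ} (h : HasCubeAt x p k)
    (hkn : k ≤ n) (hn : n < k + 2 * p) : x n = x (n + p) := by
  simpa [show k + (n - k) = n by omega, show k + p + (n - k) = n + p by omega] using
    h (n - k) (by omega)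

lemma HasCubeAt.tm_half {q k : ℕ} (h : HasCubeAt tm (2 * q) k) :
    HasCubeAt tm q ((k + 1) / 2) := by
  intro j _
  have := h.eq_add_period (n := 2 * ((k + 1) / 2 + j)) (by omega) (by omega)
  rwa [show 2 * ((k + 1) / 2 + j) + 2 * q = 2 * ((k + 1) / 2 + q + j) by ring, tm_two_mul,
    tm_two_mul] at this

lemma not_hasCubeAt_tm_odd {q k : ℕ} (hq : 1 ≤ q) : ¬ HasCubeAt tm (2 * q + 1) k := by
  intro h
  set m := (k + 1) / 2
  have step : ∀ m', m ≤ m' → m' ≤ m + 1 → tm (m' + q) = tm (m' + q + 1) := fun m' _ _ ↦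
    tm_add_eq_tm_add_add_one_of_odd_shift (h.eq_add_period (by omega) (by omega))
      (h.eq_add_period (by omega) (by omega))
  refine tm_not_three_consecutive_eq (m + q) ⟨step m le_rfl (by omega), ?_⟩
  simpa [add_right_comm] using step (m + 1) (by omega) le_rfl

lemma not_hasCubeAt_tm {p : ℕ} (hp : 1 ≤ p) (k : ℕ) : ¬ HasCubeAt tm p k := by
  induction p using Nat.strong_induction_on generalizing k with
  | _ p ih =>
    intro h
    rcases Nat.even_or_odd' p with ⟨q, rfl | rfl⟩
    · exact ih q (by omega) (by omega) _ h.tm_half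
    · rcases Nat.eq_zero_or_pos q with rfl | hq
      · exact tm_not_three_consecutive_eq k ⟨h 0 (by omega), h 1 (by omega)⟩
      · exact not_hasCubeAt_tm_odd hq h

lemma List.getD_append_append_length_add {α : Type*} (v : List α) (d : α) {i : ℕ}
    (hi : i < 2 * v.length) : (v ++ v ++ v).getD (v.length + i) d = (v ++ v ++ v).getD i d := by
  rw [List.append_assoc, List.getD_append_right _ _ _ _ (by omega), Nat.add_sub_cancel_left]
  rcases Nat.lt_or_ge i v.length with h | h
  · rw [List.getD_append _ _ _ _ h, List.getD_append _ _ _ _ (by simpa using h)]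
  · rw [List.getD_append_right _ _ _ _ h, List.getD_append_right v (v ++ v) d i h,
      List.getD_append _ _ _ _ (by omega)]

lemma OccursAt.hasCubeAt {v : List Bool} {x : ℕ → Bool} {k : ℕ} (h : OccursAt (v ++ v ++ v) x k) :
    HasCubeAt x v.length k := by
  intro i hi
  have hlen : (v ++ v ++ v).length = 3 * v.length := by simp; omega
  rw [← h i (by omega), add_assoc, ← h (v.length + i) (by omega),
    List.getD_append_append_length_add v false hi]

theorem stmt3 : ∀ v : List Bool, v ≠ [] → ¬ FactorOfN (v ++ v ++ v) tm := by
  rintro v hv ⟨k, hk⟩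
  exact not_hasCubeAt_tm (List.length_pos_iff.mpr hv) k hk.hasCubeAt
end

section
/- The Thue–Morse sequence is not rank-one: the set A_M = {v ∈ 𝓕 : M is built from v} equals {0}, hence is finite. -/
/-! The Thue–Morse word starts with `0` and has infinitely many zeros, so it is built from `0`.
Conversely, if it is built from some `v ∈ 𝓕` other than `0`, then `v` starts with `011`, and since
`11` occurs in Thue–Morse only at odd positions, every copy of `v` starts at an even position.
A parity count then forces all the blocks of ones between consecutive copies of `v` to have the same
length `c = |v| mod 2` (three consecutive ones never occur), so Thue–Morse would be periodic with
period `|v| + c`, which it is not. -/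

section Words

lemma prefixOf_append {u w : List Bool} {V : ℕ → Bool} :
    PrefixOf (u ++ w) V ↔ PrefixOf u V ∧ OccursAt w V u.length := by
  refine ⟨fun h => ⟨fun i hi => ?_, fun i hi => ?_⟩, fun ⟨hu, hw⟩ i hi => ?_⟩
  · rw [← h i (by rw [List.length_append]; omega), List.getD_append _ _ _ _ hi]
  · rw [← h _ (by rw [List.length_append]; omega), List.getD_append_right _ _ _ _ (by omega),
      Nat.add_sub_cancel_left]
  · by_cases hiu : i < u.length
    · rw [List.getD_append _ _ _ _ hiu, hu i hiu]
    · rw [List.getD_append_right _ _ _ _ (by omega), hw _ (by rw [List.length_append] at hi; omega)]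
      congr 1
      omega

@[simp]
lemma length_ones (a : ℕ) : (ones a).length = a := List.length_replicate

lemma occursAt_ones {a k : ℕ} {V : ℕ → Bool} :
    OccursAt (ones a) V k ↔ ∀ j < a, V (k + j) = true := by
  unfold OccursAt ones
  rw [List.length_replicate]
  exact forall₂_congr fun j hj => by rw [eq_comm]; simp [List.getD_eq_getElem?_getD, hj]

lemma occursAt_singleton {b : Bool} {k : ℕ} {V : ℕ → Bool} : OccursAt [b] V k ↔ V k = b := by
  simp [OccursAt, eq_comm]

lemma length_stage_succ (v : List Bool) (a : ℕ → ℕ) (n : ℕ) :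
    (stage v a (n + 1)).length = (stage v a n).length + a n + v.length := by
  simp [stage, add_assoc]

lemma prefixOf_stage_succ_iff {v : List Bool} {a : ℕ → ℕ} {V : ℕ → Bool} {n : ℕ} :
    PrefixOf (stage v a (n + 1)) V ↔ PrefixOf (stage v a n) V ∧
      (∀ j < a n, V ((stage v a n).length + j) = true) ∧
      OccursAt v V ((stage v a n).length + a n) := by
  simp only [stage, prefixOf_append, occursAt_ones, List.length_append, length_ones, and_assoc]

lemma stage_const_succ (v : List Bool) (c n : ℕ) :
    stage v (fun _ => c) (n + 1) = v ++ ones c ++ stage v (fun _ => c) n := by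
  induction n with
  | zero => rfl
  | succ n ih =>
    change stage v (fun _ => c) (n + 1) ++ ones c ++ v =
      v ++ ones c ++ (stage v (fun _ => c) n ++ ones c ++ v)
    rw [ih]
    simp

lemma le_length_stage_const {v : List Bool} {c : ℕ} (hP : 0 < v.length + c) (n : ℕ) :
    n ≤ (stage v (fun _ => c) n).length := by
  induction n with
  | zero => exact Nat.zero_le _
  | succ n ih => rw [length_stage_succ]; omega

lemma periodic_of_prefixOf_stage_const {v : List Bool} {c : ℕ} {V : ℕ → Bool}
    (h : ∀ n, PrefixOf (stage v (fun _ => c) n) V) : Function.Periodic V (v.length + c) := by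
  intro i
  rcases Nat.eq_zero_or_pos (v.length + c) with hP | hP
  · rw [hP, add_zero]
  have hi : i < (stage v (fun _ => c) (i + 1)).length := le_length_stage_const hP (i + 1)
  have hocc := (prefixOf_append.mp (stage_const_succ v c (i + 1) ▸ h (i + 2))).2
  calc V (i + (v.length + c)) = V ((v ++ ones c).length + i) := by simp [add_comm]
    _ = (stage v (fun _ => c) (i + 1)).getD i false := (hocc i hi).symm
    _ = V i := h (i + 1) i hi

lemma builtFrom_singleton_false {V : ℕ → Bool} (h0 : V 0 = false)
    (hinf : {i | V i = false}.Infinite) : BuiltFrom V [false] := by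
  set z := Nat.nth fun i => V i = false
  have hz_lt (n : ℕ) : z n < z (n + 1) := (Nat.nth_lt_nth hinf).mpr n.lt_succ_self
  have hz_gap {n k : ℕ} (h₁ : z n < k) (h₂ : k < z (n + 1)) : V k = true := by
    by_contra hV
    exact absurd (Nat.le_nth_of_lt_nth_succ h₂ (Bool.not_eq_true _ ▸ hV)) (not_le.mpr h₁)
  refine ⟨fun n => z (n + 1) - z n - 1, fun n => ?_⟩
  suffices PrefixOf (stage [false] (fun n => z (n + 1) - z n - 1) n) V ∧
      (stage [false] (fun n => z (n + 1) - z n - 1) n).length = z n + 1 from this.1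
  induction n with
  | zero =>
    refine ⟨fun i hi => ?_, by simp [stage, z, Nat.nth_zero_of_zero (p := fun i => V i = false) h0]⟩
    simp only [stage, List.length_singleton, Nat.lt_one_iff] at hi
    simp [stage, hi, h0]
  | succ n ih =>
    have hlt := hz_lt n
    refine ⟨prefixOf_stage_succ_iff.mpr ⟨ih.1, fun j hj => ?_, ?_⟩, ?_⟩
    · exact hz_gap (n := n) (k := _ + j) (by rw [ih.2]; omega) (by rw [ih.2]; omega)
    · rw [occursAt_singleton, ih.2, show z n + 1 + (z (n + 1) - z n - 1) = z (n + 1) by omega]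
      exact Nat.nth_mem_of_infinite hinf (n + 1)
    · rw [length_stage_succ, ih.2, List.length_singleton]
      omega

end Words

section ThueMorse

lemma tm_zero : tm 0 = false := by simp [tm]

lemma tm_one : tm 1 = true := by simpa [tm_zero] using tm_two_mul_add_one 0

lemma tm_two : tm 2 = true := by simpa [tm_one] using tm_two_mul 1

lemma odd_of_tm_eq_tm_succ {k : ℕ} (h : tm k = tm (k + 1)) : Odd k := by
  by_contra hk
  obtain ⟨m, rfl⟩ := Nat.not_odd_iff_even.mp hk
  rw [← two_mul, tm_two_mul_add_one, tm_two_mul] at h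
  simp at h

lemma infinite_setOf_tm_eq_false : {i | tm i = false}.Infinite := by
  refine Set.infinite_of_forall_exists_gt fun p => ?_
  cases hp : tm (p + 1)
  · exact ⟨2 * (p + 1), by simp [tm_two_mul, hp], by omega⟩
  · exact ⟨2 * (p + 1) + 1, by simp [tm_two_mul_add_one, hp], by omega⟩

lemma tm_not_periodic {P : ℕ} (hP : 0 < P) : ¬ Function.Periodic tm P := by
  induction P using Nat.strong_induction_on with
  | _ P ih =>
    intro h
    obtain ⟨Q, rfl | rfl⟩ := Nat.even_or_odd' P
    · refine ih Q (by omega) (by omega) fun n => ?_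
      rw [← tm_two_mul, ← tm_two_mul n, mul_add, h]
    · have hflip : ∀ n, tm (n + Q) = !tm n := fun n => by
        have := h (2 * n)
        rw [show 2 * n + (2 * Q + 1) = 2 * (n + Q) + 1 by ring, tm_two_mul_add_one, tm_two_mul] at this
        rw [← this, Bool.not_not]
      rcases Nat.eq_zero_or_pos Q with rfl | hQ
      · simpa using hflip 0
      · refine ih (2 * Q) (by omega) (by omega) fun n => ?_
        rw [two_mul, ← add_assoc, hflip, hflip, Bool.not_not]

end ThueMorse

section GapsOfThueMorse

variable {v : List Bool} {a : ℕ → ℕ}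

lemma tm_gap_eq_true (h : ∀ n, PrefixOf (stage v a n) tm) {n j : ℕ} (hj : j < a n) :
    tm ((stage v a n).length + j) = true :=
  (prefixOf_stage_succ_iff.mp (h (n + 1))).2.1 j hj

lemma tm_copy_eq (h : ∀ n, PrefixOf (stage v a n) tm) (n : ℕ) {i : ℕ} (hi : i < v.length) :
    tm ((stage v a n).length + a n + i) = tm i := by
  rw [← (prefixOf_stage_succ_iff.mp (h (n + 1))).2.2 i hi]
  exact h 0 i hi

/-- Copies of a word starting with `011` can only sit at even positions of Thue–Morse. -/
lemma even_copy_position (hv : 3 ≤ v.length) (h : ∀ n, PrefixOf (stage v a n) tm) (n : ℕ) :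
    Even ((stage v a n).length + a n) := by
  have h1 := tm_copy_eq h n (i := 1) (by omega)
  have h2 := tm_copy_eq h n (i := 2) (by omega)
  rw [tm_one] at h1
  rw [tm_two] at h2
  simpa [Nat.odd_add_one] using odd_of_tm_eq_tm_succ (h1.trans h2.symm)

lemma length_stage_mod_two (hv : 3 ≤ v.length) (h : ∀ n, PrefixOf (stage v a n) tm) (n : ℕ) :
    (stage v a n).length % 2 = v.length % 2 := by
  cases n with
  | zero => rfl
  | succ n =>
    have := even_copy_position hv h n
    rw [length_stage_succ]
    rcases this with ⟨k, hk⟩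
    omega

lemma gap_eq_length_mod_two (hv : 3 ≤ v.length) (h : ∀ n, PrefixOf (stage v a n) tm) (n : ℕ) :
    a n = v.length % 2 := by
  set L := (stage v a n).length
  have hL : L % 2 = v.length % 2 := length_stage_mod_two hv h n
  have hpar : (L + a n) % 2 = 0 := Nat.even_iff.mp (even_copy_position hv h n)
  have hL_odd : 2 ≤ a n → L % 2 = 1 := fun ha => Nat.odd_iff.mp <| odd_of_tm_eq_tm_succ <|
    (tm_gap_eq_true h (j := 0) (by omega)).trans (tm_gap_eq_true h (j := 1) (by omega)).symm
  have hlt : a n < 2 := by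
    by_contra ha
    have hL₁ := hL_odd (by omega)
    have hodd : Odd (L + 1) := odd_of_tm_eq_tm_succ <|
      (tm_gap_eq_true h (j := 1) (by omega)).trans (tm_gap_eq_true h (j := 2) (by omega)).symm
    rw [Nat.odd_iff] at hodd
    omega
  omega

end GapsOfThueMorse

lemma eq_singleton_false_of_mem_AV_tm {v : List Bool} (hv : v ∈ AV tm) : v = [false] := by
  obtain ⟨⟨hhead, hlast⟩, a, h⟩ := hv
  rcases v with _ | ⟨b, _ | ⟨c, _ | ⟨d, t⟩⟩⟩
  · simp at hhead
  · simpa using hhead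
  · have hc : c = true := tm_one ▸ h 0 1 (by simp [stage])
    simp [hc] at hlast
  · have hv : 3 ≤ (b :: c :: d :: t).length := by simp
    obtain rfl : a = fun _ => (b :: c :: d :: t).length % 2 :=
      funext (gap_eq_length_mod_two hv h)
    exact (tm_not_periodic (by omega) (periodic_of_prefixOf_stage_const h)).elim

theorem stmt6 : AV tm = {[false]} ∧ (AV tm).Finite := by
  have hAV : AV tm = {[false]} := by
    ext v
    refine ⟨eq_singleton_false_of_mem_AV_tm, ?_⟩
    rintro rfl
    exact ⟨⟨rfl, rfl⟩, builtFrom_singleton_false tm_zero infinite_setOf_tm_eq_false⟩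
  exact ⟨hAV, hAV ▸ Set.finite_singleton _⟩
end

section
/- If V ∈ {0,1}^ℕ and x, y ∈ A_V with |y| > |x|, then either y is built from x, or there exists z ∈ A_V built from both x and y. -/
/-!
A prefix of `V` that ends in `0` is determined by its number of zeros. Let `r < R` be the numbers
of zeros of `x` and `y` and `L = lcm r R`; the prefix `z` of `V` with `L` zeros is a stage of the
decomposition of `V` into copies of `x` and also of the one into copies of `y`, so `z` is built
from both, and `z = y` when `L = R`. Otherwise, when `R ∤ n r` the `(n r)`-th zero of `V` lies
strictly inside a copy of `y`, so the run of ones after it depends only on `n r mod R`. Hence the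
exponents of the `x`-decomposition are periodic with period `L / r`, and `V` is built from `z`.
-/

@[simp] lemma count_false_ones (t : ℕ) : (ones t).count false = 0 := by
  simp [ones, List.count_replicate]

lemma count_false_pos_of_getLast? {w : List Bool} (hw : w.getLast? = some false) :
    0 < w.count false :=
  List.count_pos_iff.mpr (List.mem_of_getLast? hw)

section Stage

variable {v : List Bool} {a : ℕ → ℕ}

lemma stage_succ (v : List Bool) (a : ℕ → ℕ) (n : ℕ) :
    stage v a (n + 1) = stage v a n ++ ones (a n) ++ v := rfl

lemma count_false_stage (n : ℕ) : (stage v a n).count false = (n + 1) * v.count false := by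
  induction n with
  | zero => simp [stage]
  | succ n ih => simp only [stage_succ, List.count_append, ih, count_false_ones]; ring

lemma stage_head? {c : Bool} (hv : v.head? = some c) (n : ℕ) : (stage v a n).head? = some c := by
  induction n with
  | zero => exact hv
  | succ n ih => simp [stage_succ, ih]

lemma stage_getLast? {c : Bool} (hv : v.getLast? = some c) (n : ℕ) :
    (stage v a n).getLast? = some c := by
  cases n with
  | zero => exact hv
  | succ n => simp [stage_succ, hv]

lemma stage_eq_append_flatten (n : ℕ) :
    stage v a n = v ++ (((List.range n).map a).map fun c => ones c ++ v).flatten := by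
  induction n with
  | zero => simp [stage]
  | succ n ih => simp [stage_succ, ih, List.range_succ]

lemma fBuiltFrom_stage {n : ℕ} (hn : n ≠ 0) : FBuiltFrom (stage v a n) v :=
  ⟨(List.range n).map a, by simpa using hn, stage_eq_append_flatten n⟩

lemma stage_congr {a' : ℕ → ℕ} {n : ℕ} (h : ∀ i < n, a i = a' i) :
    stage v a n = stage v a' n := by
  induction n with
  | zero => rfl
  | succ n ih =>
    rw [stage_succ, stage_succ, ih fun i hi => h i (by omega), h n (by omega)]

lemma stage_add_succ (n m : ℕ) :
    stage v a (n + 1 + m) = stage v a n ++ ones (a n) ++ stage v (fun i => a (n + 1 + i)) m := by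
  induction m with
  | zero => rfl
  | succ m ih => rw [← add_assoc, stage_succ, ih, stage_succ]; simp

lemma stage_mul_add_of_periodic {m : ℕ} (hper : ∀ k, ∀ i < m, a (k * (m + 1) + i) = a i)
    (s : ℕ) :
    stage v a (s * (m + 1) + m) = stage (stage v a m) (fun k => a (k * (m + 1) + m)) s := by
  induction s with
  | zero => simp [stage]
  | succ s ih =>
    have hidx : (s + 1) * (m + 1) + m = s * (m + 1) + m + 1 + m := by ring
    rw [hidx, stage_add_succ, ih, stage_succ]
    congr 1
    exact stage_congr fun i hi => by rw [← hper (s + 1) i hi]; congr 1; ring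

lemma InF.stage (hv : InF v) (a : ℕ → ℕ) (n : ℕ) : InF (stage v a n) :=
  ⟨stage_head? hv.1 n, stage_getLast? hv.2 n⟩

lemma builtFrom_stage_of_periodic {V : ℕ → Bool} {m : ℕ}
    (ha : ∀ n, PrefixOf (stage v a n) V) (hper : ∀ k, ∀ i < m, a (k * (m + 1) + i) = a i) :
    BuiltFrom V (stage v a m) :=
  ⟨fun k => a (k * (m + 1) + m), fun s => stage_mul_add_of_periodic hper s ▸ ha _⟩

end Stage

section PrefixOf

variable {V : ℕ → Bool} {w w₁ w₂ : List Bool}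

lemma PrefixOf.mono (hw : PrefixOf w V) (h : w₁ <+: w) : PrefixOf w₁ V := by
  obtain ⟨rest, rfl⟩ := h
  intro i hi
  rw [← hw i (by simp; omega), List.getD_append _ _ _ _ hi]

lemma PrefixOf.isPrefix_of_length_le (h₁ : PrefixOf w₁ V) (h₂ : PrefixOf w₂ V)
    (hl : w₁.length ≤ w₂.length) : w₁ <+: w₂ := by
  refine List.prefix_iff_getElem.mpr ⟨hl, fun i hi => ?_⟩
  have e₁ := h₁ i hi
  have e₂ := h₂ i (by omega)
  rw [List.getD_eq_getElem _ _ hi] at e₁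
  rw [List.getD_eq_getElem _ _ (by omega)] at e₂
  rw [e₁, e₂]

lemma PrefixOf.eq_of_count_false_eq (h₁ : PrefixOf w₁ V) (h₂ : PrefixOf w₂ V)
    (g₁ : w₁.getLast? = some false) (g₂ : w₂.getLast? = some false)
    (hc : w₁.count false = w₂.count false) : w₁ = w₂ := by
  wlog hl : w₁.length ≤ w₂.length generalizing w₁ w₂
  · exact (this h₂ h₁ g₂ g₁ hc.symm (by omega)).symm
  obtain ⟨rest, rfl⟩ := h₁.isPrefix_of_length_le h₂ hl
  rcases rest.eq_nil_or_concat with rfl | ⟨rest, c, rfl⟩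
  · simp
  · have hc' : c = false := by simpa using g₂
    subst hc'
    simp at hc

lemma PrefixOf.count_false_lt (h₁ : PrefixOf w₁ V) (h₂ : PrefixOf w₂ V)
    (g₁ : w₁.getLast? = some false) (g₂ : w₂.getLast? = some false)
    (hl : w₁.length < w₂.length) : w₁.count false < w₂.count false := by
  have hle := (h₁.isPrefix_of_length_le h₂ hl.le).sublist.count_le false
  refine hle.lt_of_ne fun hc => ?_
  rw [h₁.eq_of_count_false_eq h₂ g₁ g₂ hc] at hl
  exact hl.false

end PrefixOf

lemma exists_ones_append_false_prefix {w : List Bool} (hw : false ∈ w) :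
    ∃ t, ones t ++ [false] <+: w := by
  induction w with
  | nil => simp at hw
  | cons c w ih =>
    cases c with
    | false => exact ⟨0, by simp [ones]⟩
    | true =>
      obtain ⟨t, ht⟩ := ih (by simpa using hw)
      exact ⟨t + 1, by simpa [ones, List.replicate_succ] using ht⟩

lemma exists_gap_prefix {w : List Bool} {v : ℕ} (hv : 0 < v) (hvw : v < w.count false) :
    ∃ p t, p.getLast? = some false ∧ p.count false = v ∧ p ++ ones t ++ [false] <+: w := by
  induction w generalizing v with
  | nil => simp at hvw
  | cons c w ih =>
    cases c with
    | true =>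
      obtain ⟨p, t, hp, hpv, hpw⟩ := ih hv (by simpa using hvw)
      exact ⟨true :: p, t, by simp [List.getLast?_cons, hp], by simpa using hpv,
        by simpa using hpw⟩
    | false =>
      obtain _ | _ | v := v
      · exact absurd hv (lt_irrefl 0)
      · obtain ⟨t, ht⟩ := exists_ones_append_false_prefix (w := w)
          (List.count_pos_iff.mp (by simpa using hvw))
        exact ⟨[false], t, rfl, rfl, by simpa using ht⟩
      · obtain ⟨p, t, hp, hpv, hpw⟩ := ih (v := v + 1) v.succ_pos (by simpa using hvw)
        exact ⟨false :: p, t, by simp [List.getLast?_cons, hp], by simp [hpv],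
          by simpa using hpw⟩

/-- `V` has exactly `t` ones between its `m`-th and `(m + 1)`-st zero. -/
def GapAt (V : ℕ → Bool) (m t : ℕ) : Prop :=
  ∃ p : List Bool, p.getLast? = some false ∧ p.count false = m ∧
    PrefixOf (p ++ ones t ++ [false]) V

namespace GapAt

variable {V : ℕ → Bool} {m t t' : ℕ}

lemma unique (h : GapAt V m t) (h' : GapAt V m t') : t = t' := by
  obtain ⟨p, hp, hpm, hpV⟩ := h
  obtain ⟨p', hp', hpm', hpV'⟩ := h'
  obtain rfl : p = p' :=
    (hpV.mono (by simp)).eq_of_count_false_eq (hpV'.mono (by simp)) hp hp' (hpm.trans hpm'.symm)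
  have h := hpV.eq_of_count_false_eq hpV' (by simp) (by simp) (by simp)
  simpa [ones] using congrArg List.length h

lemma of_prefixOf_append {q w p : List Bool} (hq : PrefixOf (q ++ w) V)
    (hp : p.getLast? = some false) (hpw : p ++ ones t ++ [false] <+: w) :
    GapAt V (q.count false + p.count false) t :=
  ⟨q ++ p, by simp [hp], List.count_append .., hq.mono (by simpa using hpw)⟩

end GapAt

lemma gapAt_of_stage {V : ℕ → Bool} {x : List Bool} {a : ℕ → ℕ} (hx : InF x)
    (ha : ∀ n, PrefixOf (stage x a n) V) (n : ℕ) :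
    GapAt V ((n + 1) * x.count false) (a n) := by
  obtain ⟨x', rfl⟩ := List.head?_eq_some_iff.mp hx.1
  refine ⟨stage _ a n, stage_getLast? hx.2 n, count_false_stage n, (ha (n + 1)).mono ?_⟩
  simp [stage_succ]

lemma exists_gapAt_of_stage {V : ℕ → Bool} {y : List Bool} {b : ℕ → ℕ}
    (hb : ∀ n, PrefixOf (stage y b n) V) {v : ℕ} (hv : 0 < v) (hvy : v < y.count false) :
    ∃ t, ∀ k, GapAt V (k * y.count false + v) t := by
  obtain ⟨p, t, hp, rfl, hpy⟩ := exists_gap_prefix hv hvy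
  refine ⟨t, fun k => ?_⟩
  obtain ⟨q, hq, hqk⟩ : ∃ q, PrefixOf (q ++ y) V ∧ q.count false = k * y.count false := by
    cases k with
    | zero => exact ⟨[], hb 0, by simp⟩
    | succ k => exact ⟨stage y b k ++ ones (b k), hb (k + 1), by simp [count_false_stage]⟩
  simpa [hqk] using GapAt.of_prefixOf_append hq hp hpy

lemma exists_succ_mul_eq_lcm {r R : ℕ} (hr : 0 < r) (hR : 0 < R) :
    ∃ m, (m + 1) * r = Nat.lcm r R := by
  obtain ⟨u, hu⟩ := Nat.dvd_lcm_left r R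
  have hu0 : u ≠ 0 := by rintro rfl; exact Nat.lcm_ne_zero hr.ne' hR.ne' (by simpa using hu)
  exact ⟨u - 1, by rw [Nat.sub_add_cancel (Nat.one_le_iff_ne_zero.mpr hu0), hu, mul_comm]⟩

lemma stage_exponent_periodic {V : ℕ → Bool} {a : ℕ → ℕ} {r R m : ℕ} (hr : 0 < r)
    (hR : 0 < R) (hgx : ∀ n, GapAt V ((n + 1) * r) (a n))
    (hgy : ∀ v, 0 < v → v < R → ∃ t, ∀ k, GapAt V (k * R + v) t)
    (hm : (m + 1) * r = Nat.lcm r R) (k i : ℕ) (hi : i < m) :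
    a (k * (m + 1) + i) = a i := by
  have hv : (i + 1) * r % R ≠ 0 := fun h => by
    have hdvd : Nat.lcm r R ∣ (i + 1) * r :=
      Nat.lcm_dvd (dvd_mul_left r _) (Nat.dvd_of_mod_eq_zero h)
    have := Nat.le_of_dvd (by positivity) hdvd
    nlinarith
  obtain ⟨t, ht⟩ := hgy _ (Nat.pos_of_ne_zero hv) (Nat.mod_lt _ hR)
  have hgap : ∀ n, (n + 1) * r % R = (i + 1) * r % R → a n = t := fun n hn =>
    (hgx n).unique (by simpa [← hn, Nat.div_add_mod'] using ht ((n + 1) * r / R))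
  refine (hgap _ ?_).trans (hgap i rfl).symm
  obtain ⟨c, hc⟩ := Nat.dvd_lcm_right r R
  have hidx : (k * (m + 1) + i + 1) * r = (i + 1) * r + R * (k * c) := by
    rw [← mul_assoc, mul_comm R k, mul_assoc, ← hc, ← hm]; ring
  rw [hidx, Nat.add_mul_mod_self_left]

theorem stmt7 (V : ℕ → Bool) (x y : List Bool) (hx : x ∈ AV V) (hy : y ∈ AV V)
    (h : x.length < y.length) :
    FBuiltFrom y x ∨ ∃ z ∈ AV V, FBuiltFrom z x ∧ FBuiltFrom z y := by
  obtain ⟨hxF, a, ha⟩ := hx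
  obtain ⟨hyF, b, hb⟩ := hy
  have hr : 0 < x.count false := count_false_pos_of_getLast? hxF.2
  have hrR : x.count false < y.count false := (ha 0).count_false_lt (hb 0) hxF.2 hyF.2 h
  have hR : 0 < y.count false := hr.trans hrR
  obtain ⟨m, hm⟩ := exists_succ_mul_eq_lcm hr hR
  obtain ⟨m', hm'⟩ := exists_succ_mul_eq_lcm hR hr
  rw [Nat.lcm_comm] at hm'
  have hz : stage x a m = stage y b m' :=
    (ha m).eq_of_count_false_eq (hb m') (stage_getLast? hxF.2 m) (stage_getLast? hyF.2 m')
      (by rw [count_false_stage, count_false_stage, hm, hm'])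
  have hm0 : m ≠ 0 := by
    rintro rfl
    have hdvd : y.count false ∣ x.count false := by
      simpa [← hm] using Nat.dvd_lcm_right (x.count false) (y.count false)
    exact hrR.not_ge (Nat.le_of_dvd hr hdvd)
  cases m' with
  | zero => exact Or.inl (hz ▸ fBuiltFrom_stage hm0 : FBuiltFrom (stage y b 0) x)
  | succ m' =>
    have hper := stage_exponent_periodic hr hR (gapAt_of_stage hxF ha)
      (fun _ hv => exists_gapAt_of_stage hb hv) hm
    exact Or.inr ⟨stage x a m, ⟨hxF.stage a m, builtFrom_stage_of_periodic ha hper⟩,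
      fBuiltFrom_stage hm0, hz ▸ fBuiltFrom_stage m'.succ_ne_zero⟩
end

section
/- For any V ∈ {0,1}^ℕ, A_V is infinite if and only if there exists a generating sequence (v_n) with v_0 = 0 and v_{n+1} = v_n 1^{a_{n,1}} v_n ⋯ v_n 1^{a_{n,q_n−1}} v_n (q_n ≥ 2) such that v_n is a prefix of V for every n. -/
/-!
A word of `𝓕` is `0 1^{c₁} 0 ⋯ 1^{c_k} 0 = ofRuns [c₁, …, c_k]`, and on run lengths the word
`v 1^{a₁} v ⋯ 1^{a_q} v` becomes `l a₁ l ⋯ a_q l = buildFrom l [a₁, …, a_q]`. Either side of the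
equivalence forces `V` to start with `0` and to contain infinitely many zeros; let `b = runs V` be
its sequence of run lengths. The prefixes of `V` in `𝓕` are the words `ofRuns [b 0, …, b (m - 1)]`,
and such a word lies in `A_V` exactly when `b` is `(m + 1)`-periodic away from the positions
`≡ -1 (mod m + 1)`, where the separators `aᵢ` sit (`BlockPeriodic`). These periods are closed under
`lcm`, so infinitely many of them contain a divisibility chain `1 = p₀ ∣ p₁ ∣ ⋯`, which yields a
generating sequence. Conversely, each term of a generating sequence is built from every earlier
one (`buildFrom_buildFrom`), so the period condition of a term holds on arbitrarily long prefixes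
of `b`, hence everywhere, and the terms are infinitely many distinct elements of `A_V`.
-/

def ofRuns : List ℕ → List Bool
  | [] => [false]
  | c :: l => false :: (ones c ++ ofRuns l)

def buildFrom {α : Type*} (l cs : List α) : List α := l ++ (cs.map fun c => c :: l).flatten

def BlockPeriodic {α : Type*} (b : ℕ → α) (p : ℕ) : Prop := ∀ n, ¬ p ∣ n + 1 → b n = b (n % p)

noncomputable def zeroPos (V : ℕ → Bool) (i : ℕ) : ℕ := Nat.nth (fun x => V x = false) i

noncomputable def runs (V : ℕ → Bool) (i : ℕ) : ℕ := zeroPos V (i + 1) - zeroPos V i - 1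

section Words

theorem ofRuns_append_cons (l : List ℕ) (c : ℕ) (l' : List ℕ) :
    ofRuns (l ++ c :: l') = ofRuns l ++ ones c ++ ofRuns l' := by
  induction l with
  | nil => simp [ofRuns]
  | cons d l ih => simp [ofRuns, ih]

theorem ofRuns_concat (l : List ℕ) (c : ℕ) : ofRuns (l ++ [c]) = ofRuns l ++ ones c ++ [false] :=
  ofRuns_append_cons l c []

theorem length_ofRuns (l : List ℕ) : (ofRuns l).length = l.length + l.sum + 1 := by
  induction l with
  | nil => rfl
  | cons c l ih =>
    simp only [ofRuns, ones, List.length_cons, List.length_append, List.length_replicate, ih,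
      List.sum_cons]
    ring

theorem getLast?_ofRuns (l : List ℕ) : (ofRuns l).getLast? = some false := by
  induction l using List.reverseRecOn with
  | nil => rfl
  | append_singleton l c _ => simp [ofRuns_concat]

theorem inF_ofRuns (l : List ℕ) : InF (ofRuns l) := by
  refine ⟨?_, getLast?_ofRuns l⟩
  cases l <;> rfl

theorem exists_ofRuns_append_ones (u : List Bool) : ∃ l c, false :: u = ofRuns l ++ ones c := by
  induction u using List.reverseRecOn with
  | nil => exact ⟨[], 0, rfl⟩
  | append_singleton u x ih =>
    obtain ⟨l, c, h⟩ := ih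
    cases x
    · exact ⟨l ++ [c], 0, by rw [ofRuns_concat, ← List.cons_append, h]; simp [ones]⟩
    · exact ⟨l, c + 1, by rw [← List.cons_append, h, ones, ones, List.replicate_succ',
        List.append_assoc]⟩

theorem InF.exists_eq_ofRuns {w : List Bool} (h : InF w) : ∃ l, w = ofRuns l := by
  obtain ⟨hhead, hlast⟩ := h
  obtain _ | ⟨x, u⟩ := w
  · simp at hhead
  obtain rfl : x = false := by simpa using hhead
  obtain ⟨l, c, hu⟩ := exists_ofRuns_append_ones u
  rw [hu] at hlast ⊢
  obtain _ | c := c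
  · exact ⟨l, by simp [ones]⟩
  · simp [ones, List.replicate_succ', ← List.append_assoc] at hlast

theorem stage_eq_flatten (v : List Bool) (a : ℕ → ℕ) (t : ℕ) :
    stage v a t = v ++ (((List.range t).map a).map fun c => ones c ++ v).flatten := by
  induction t with
  | zero => simp [stage]
  | succ t ih => simp [stage, ih, List.range_succ]

end Words

section BuildFrom

variable {α : Type*}

@[simp]
theorem buildFrom_nil (l : List α) : buildFrom l [] = l := by simp [buildFrom]

theorem buildFrom_append_cons (l cs : List α) (c : α) (cs' : List α) :
    buildFrom l (cs ++ c :: cs') = buildFrom l cs ++ c :: buildFrom l cs' := by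
  simp [buildFrom]

theorem buildFrom_cons (l : List α) (c : α) (cs : List α) :
    buildFrom l (c :: cs) = l ++ c :: buildFrom l cs := by
  simpa using buildFrom_append_cons l [] c cs

theorem buildFrom_concat (l cs : List α) (c : α) :
    buildFrom l (cs ++ [c]) = buildFrom l cs ++ c :: l := by
  simp [buildFrom_append_cons]

theorem length_buildFrom (l cs : List α) :
    (buildFrom l cs).length + 1 = (cs.length + 1) * (l.length + 1) := by
  induction cs with
  | nil => simp
  | cons c cs ih =>
    simp only [buildFrom_cons, List.length_append, List.length_cons]
    linarith

theorem length_lt_length_buildFrom (l : List α) {cs : List α} (h : cs ≠ []) :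
    l.length < (buildFrom l cs).length := by
  obtain ⟨c, cs, rfl⟩ := List.exists_cons_of_ne_nil h
  simp [buildFrom_cons]

theorem buildFrom_buildFrom (l cs ds : List α) :
    buildFrom (buildFrom l cs) ds = buildFrom l (buildFrom cs ds) := by
  induction ds with
  | nil => simp
  | cons d ds ih => rw [buildFrom_cons, buildFrom_cons, buildFrom_append_cons, ih]

theorem ofRuns_buildFrom (l cs : List ℕ) :
    ofRuns (buildFrom l cs) = ofRuns l ++ (cs.map fun c => ones c ++ ofRuns l).flatten := by
  induction cs with
  | nil => simp
  | cons c cs ih => simp [buildFrom_cons, ofRuns_append_cons, ih]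

theorem map_range_add_one_add (b : ℕ → α) (n m : ℕ) :
    (List.range (n + 1 + m)).map b =
      (List.range n).map b ++ b n :: (List.range m).map fun r => b (n + 1 + r) := by
  simp [List.range_add, List.range_succ, Function.comp_def]

end BuildFrom

namespace BlockPeriodic

variable {α : Type*} {b : ℕ → α}

theorem one (b : ℕ → α) : BlockPeriodic b 1 := fun _ hn => absurd (one_dvd _) hn

theorem apply_mul_add {p : ℕ} (hb : BlockPeriodic b p) (j : ℕ) {r : ℕ} (hr : r + 1 < p) :
    b (j * p + r) = b r := by
  have hndvd : ¬ p ∣ j * p + r + 1 := by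
    rw [add_assoc, Nat.dvd_add_right (dvd_mul_left p j)]
    intro h
    have := Nat.le_of_dvd r.succ_pos h
    omega
  rw [hb _ hndvd, Nat.mul_add_mod_self_right, Nat.mod_eq_of_lt (by omega)]

theorem apply_eq_apply_mod_of_dvd {p L n : ℕ} (hb : BlockPeriodic b p) (hpL : p ∣ L)
    (hn : ¬ p ∣ n + 1) : b n = b (n % L) := by
  have hn' : ¬ p ∣ n % L + 1 := by
    rwa [← Nat.dvd_add_left (hpL.mul_right (n / L)), add_right_comm, Nat.mod_add_div]
  rw [hb n hn, hb _ hn', Nat.mod_mod_of_dvd n hpL]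

theorem lcm {p q : ℕ} (hp : BlockPeriodic b p) (hq : BlockPeriodic b q) :
    BlockPeriodic b (p.lcm q) := by
  intro n hn
  by_cases hpn : p ∣ n + 1
  · exact hq.apply_eq_apply_mod_of_dvd (Nat.dvd_lcm_right p q) fun hqn => hn (Nat.lcm_dvd hpn hqn)
  · exact hp.apply_eq_apply_mod_of_dvd (Nat.dvd_lcm_left p q) hpn

theorem buildFrom_eq {m : ℕ} (hb : BlockPeriodic b (m + 1)) (T : ℕ) :
    buildFrom ((List.range m).map b) ((List.range T).map fun j => b (m + j * (m + 1))) =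
      (List.range (m + T * (m + 1))).map b := by
  induction T with
  | zero => simp
  | succ T ih =>
    rw [List.range_succ, List.map_append, List.map_singleton, buildFrom_concat, ih,
      show m + (T + 1) * (m + 1) = m + T * (m + 1) + 1 + m by ring, map_range_add_one_add]
    congr 2
    refine List.map_inj_left.2 fun r hr => ?_
    rw [show m + T * (m + 1) + 1 + r = (T + 1) * (m + 1) + r by ring,
      hb.apply_mul_add _ (by simpa using hr)]

theorem fBuiltFrom_ofRuns {b : ℕ → ℕ} {m m' : ℕ} (hb : BlockPeriodic b (m + 1))
    (hdvd : m + 1 ∣ m' + 1) (hlt : m < m') :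
    FBuiltFrom (ofRuns ((List.range m').map b)) (ofRuns ((List.range m).map b)) := by
  obtain ⟨s, hs⟩ := hdvd
  obtain ⟨T, rfl⟩ : ∃ T, s = T + 2 := ⟨s - 2, by rcases s with _ | _ | s <;> simp_all⟩
  refine ⟨(List.range (T + 1)).map fun j => b (m + j * (m + 1)), by simp, ?_⟩
  rw [show m' = m + (T + 1) * (m + 1) by linarith, ← hb.buildFrom_eq, ofRuns_buildFrom]

end BlockPeriodic

theorem apply_eq_apply_mod_of_buildFrom_eq {α : Type*} {b : ℕ → α} {m M : ℕ} {cs : List α}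
    (h : buildFrom ((List.range m).map b) cs = (List.range M).map b) :
    ∀ n < M, ¬ m + 1 ∣ n + 1 → b n = b (n % (m + 1)) := by
  induction cs using List.reverseRecOn generalizing M with
  | nil =>
    obtain rfl : m = M := by simpa using congrArg List.length h
    intro n hn _
    rw [Nat.mod_eq_of_lt (by omega)]
  | append_singleton cs c ih =>
    set N := (buildFrom ((List.range m).map b) cs).length
    have hN : m + 1 ∣ N + 1 := ⟨cs.length + 1, by simp [N, length_buildFrom, mul_comm]⟩
    have hM : M = N + 1 + m := by
      have := congrArg List.length h
      simp only [buildFrom_concat, List.length_append, List.length_cons, List.length_map,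
        List.length_range] at this
      omega
    rw [buildFrom_concat, hM, map_range_add_one_add] at h
    obtain ⟨hprefix, hblock⟩ := List.append_inj h (by simp [N])
    have hshift : ∀ r < m, b r = b (N + 1 + r) := by
      simpa using List.map_inj_left.1 (List.cons_eq_cons.1 hblock).2
    intro n hn hndvd
    rcases lt_trichotomy n N with hlt | rfl | hgt
    · exact ih hprefix n hlt hndvd
    · exact absurd hN hndvd
    · obtain ⟨r, rfl⟩ : ∃ r, n = N + 1 + r := ⟨n - (N + 1), by omega⟩
      obtain ⟨k, hk⟩ := hN
      rw [← hshift r (by omega), hk, Nat.mul_add_mod, Nat.mod_eq_of_lt (by omega)]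

theorem BlockPeriodic.of_buildFrom {α : Type*} {b : ℕ → α} {m : ℕ}
    (h : ∀ N, ∃ cs M, N < M ∧ buildFrom ((List.range m).map b) cs = (List.range M).map b) :
    BlockPeriodic b (m + 1) := fun n hn =>
  let ⟨_, _, hM, h⟩ := h n
  apply_eq_apply_mod_of_buildFrom_eq h n hM hn

theorem BlockPeriodic.of_buildFrom_chain {α : Type*} {b : ℕ → α} {l cs : ℕ → List α}
    (hl : ∀ n, l (n + 1) = buildFrom (l n) (cs n)) (hcs : ∀ n, cs n ≠ [])
    (hpre : ∀ n, l n = (List.range (l n).length).map b) (n : ℕ) :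
    BlockPeriodic b ((l n).length + 1) := by
  have hmono : StrictMono fun n => (l n).length :=
    strictMono_nat_of_lt_succ fun n => hl n ▸ length_lt_length_buildFrom (l n) (hcs n)
  have hlater : ∀ d, ∃ ds, l (n + d) = buildFrom (l n) ds := by
    intro d
    induction d with
    | zero => exact ⟨[], (buildFrom_nil _).symm⟩
    | succ d ih =>
      obtain ⟨ds, h⟩ := ih
      exact ⟨buildFrom ds (cs (n + d)), by rw [← buildFrom_buildFrom, ← h, ← hl]; rfl⟩
  refine BlockPeriodic.of_buildFrom fun N => ?_
  obtain ⟨ds, h⟩ := hlater (N + 1)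
  refine ⟨ds, (l (n + (N + 1))).length, ?_, ?_⟩
  · have : n + (N + 1) ≤ (l (n + (N + 1))).length := hmono.id_le _
    omega
  · rw [← hpre n, ← h, ← hpre]

theorem exists_dvd_chain {S : Set ℕ} (h1 : 1 ∈ S) (hlcm : ∀ p ∈ S, ∀ q ∈ S, p.lcm q ∈ S)
    (hS : S.Infinite) :
    ∃ p : ℕ → ℕ, p 0 = 1 ∧ ∀ n, p n ∈ S ∧ p n ∣ p (n + 1) ∧ p n < p (n + 1) := by
  choose g hgS hgt using hS.exists_gt
  let p : ℕ → ℕ := fun n => Nat.rec 1 (fun _ a => a.lcm (g a)) n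
  have hp : ∀ n, p n ∈ S ∧ 0 < p n := by
    intro n
    induction n with
    | zero => exact ⟨h1, one_pos⟩
    | succ n ih =>
      exact ⟨hlcm _ ih.1 _ (hgS _), Nat.lcm_pos ih.2 ((Nat.zero_le _).trans_lt (hgt _))⟩
  refine ⟨p, rfl, fun n => ⟨(hp n).1, Nat.dvd_lcm_left _ _, ?_⟩⟩
  exact (hgt (p n)).trans_le (Nat.le_of_dvd (hp (n + 1)).2 (Nat.dvd_lcm_right _ _))

section InfiniteWord

variable {V : ℕ → Bool}

theorem PrefixOf.apply_eq {w : List Bool} (h : PrefixOf w V) {i : ℕ} {x : Bool}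
    (hi : w[i]? = some x) : V i = x := by
  obtain ⟨hlt, rfl⟩ := List.getElem?_eq_some_iff.1 hi
  rw [← h i hlt, List.getD_eq_getElem]

theorem BuiltFrom.prefixOf {v : List Bool} (h : BuiltFrom V v) : PrefixOf v V :=
  let ⟨_, ha⟩ := h
  ha 0

theorem prefixOf_append_iff {u w : List Bool} :
    PrefixOf (u ++ w) V ↔ PrefixOf u V ∧ OccursAt w V u.length := by
  refine ⟨fun h => ⟨fun i hi => ?_, fun i hi => ?_⟩, fun ⟨hu, hw⟩ i hi => ?_⟩
  · rw [← h i (by simp; omega), List.getD_append _ _ _ _ hi]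
  · rw [← h (u.length + i) (by simp; omega), List.getD_append_right _ _ _ _ (by omega)]
    simp
  · by_cases hiu : i < u.length
    · rw [List.getD_append _ _ _ _ hiu, hu i hiu]
    · rw [List.getD_append_right _ _ _ _ (by omega), hw _ (by simp at hi; omega)]
      congr 1
      omega

theorem occursAt_ones_append_false_iff {c s : ℕ} :
    OccursAt (ones c ++ [false]) V s ↔ (∀ i < c, V (s + i) = true) ∧ V (s + c) = false := by
  refine ⟨fun h => ⟨fun i hi => ?_, ?_⟩, fun ⟨hones, hzero⟩ i hi => ?_⟩
  · simpa [ones, List.getElem?_append, hi, List.getElem?_replicate] using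
      (h i (by simp [ones]; omega)).symm
  · simpa [ones] using (h c (by simp [ones])).symm
  · simp only [ones, List.length_append, List.length_replicate, List.length_singleton] at hi
    rcases Nat.lt_or_ge i c with hic | hic
    · simp [ones, List.getElem?_append, hic, hones i hic]
    · obtain rfl : i = c := by omega
      simp [ones, hzero]

theorem eq_of_occursAt_ones_append_false {c c' s : ℕ} (h : OccursAt (ones c ++ [false]) V s)
    (h' : OccursAt (ones c' ++ [false]) V s) : c = c' := by
  rw [occursAt_ones_append_false_iff] at h h'
  by_contra hne
  rcases Nat.lt_or_gt_of_ne hne with hlt | hlt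
  · simp [h'.1 c hlt] at h
  · simp [h.1 c' hlt] at h'

theorem infinite_setOf_eq_false
    (h : ∀ N, ∃ w, PrefixOf w V ∧ w.getLast? = some false ∧ N + 1 < w.length) :
    {x | V x = false}.Infinite :=
  Set.infinite_of_forall_exists_gt fun N =>
    let ⟨w, hw, hlast, hlen⟩ := h N
    ⟨w.length - 1, hw.apply_eq (List.getLast?_eq_getElem? ▸ hlast), by omega⟩

end InfiniteWord

section RunLengths

variable {V : ℕ → Bool}

theorem zeroPos_lt_zeroPos_succ (hz : {x | V x = false}.Infinite) (i : ℕ) :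
    zeroPos V i < zeroPos V (i + 1) :=
  Nat.nth_strictMono hz (lt_add_one i)

theorem occursAt_runs (hz : {x | V x = false}.Infinite) (k : ℕ) :
    OccursAt (ones (runs V k) ++ [false]) V (zeroPos V k + 1) := by
  have hnext : zeroPos V (k + 1) = zeroPos V k + 1 + runs V k := by
    have := zeroPos_lt_zeroPos_succ hz k
    unfold runs
    omega
  rw [occursAt_ones_append_false_iff, ← hnext]
  refine ⟨fun i hi => ?_, Nat.nth_mem_of_infinite hz (k + 1)⟩
  by_contra hV
  have : zeroPos V k + 1 + i ≤ zeroPos V k :=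
    Nat.le_nth_of_lt_nth_succ (show zeroPos V k + 1 + i < zeroPos V (k + 1) by omega)
      (by simpa using hV)
  omega

variable (h0 : V 0 = false) (hz : {x | V x = false}.Infinite)
include h0 hz

theorem length_ofRuns_runs (k : ℕ) :
    (ofRuns ((List.range k).map (runs V))).length = zeroPos V k + 1 := by
  induction k with
  | zero => simp [ofRuns, zeroPos, Nat.nth_zero_of_zero (p := fun x => V x = false) h0]
  | succ k ih =>
    have := zeroPos_lt_zeroPos_succ hz k
    simp only [List.range_succ, List.map_append, List.map_singleton, ofRuns_concat,
      List.length_append, ih, ones, List.length_replicate, List.length_singleton, runs]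
    omega

theorem prefixOf_ofRuns_runs (k : ℕ) : PrefixOf (ofRuns ((List.range k).map (runs V))) V := by
  induction k with
  | zero =>
    intro i hi
    obtain rfl : i = 0 := by simpa [ofRuns] using hi
    exact h0.symm
  | succ k ih =>
    rw [List.range_succ, List.map_append, List.map_singleton, ofRuns_concat, List.append_assoc,
      prefixOf_append_iff, length_ofRuns_runs h0 hz]
    exact ⟨ih, occursAt_runs hz k⟩

theorem prefixOf_ofRuns_iff {l : List ℕ} :
    PrefixOf (ofRuns l) V ↔ l = (List.range l.length).map (runs V) := by
  refine ⟨fun h => ?_, fun h => h ▸ prefixOf_ofRuns_runs h0 hz _⟩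
  induction l using List.reverseRecOn with
  | nil => rfl
  | append_singleton l c ih =>
    rw [ofRuns_concat, List.append_assoc, prefixOf_append_iff] at h
    have hl := ih h.1
    have hc : c = runs V l.length := by
      refine eq_of_occursAt_ones_append_false h.2 ?_
      rw [hl, length_ofRuns_runs h0 hz, List.length_map, List.length_range]
      exact occursAt_runs hz _
    rw [List.length_append, List.length_singleton, List.range_succ, List.map_append, ← hl, hc]
    rfl

theorem ofRuns_runs_injective :
    Function.Injective fun m => ofRuns ((List.range m).map (runs V)) := fun m m' h =>
  Nat.nth_injective hz (by simpa [length_ofRuns_runs h0 hz, zeroPos] using congrArg List.length h)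

theorem builtFrom_ofRuns_runs_iff (m : ℕ) :
    BuiltFrom V (ofRuns ((List.range m).map (runs V))) ↔ BlockPeriodic (runs V) (m + 1) := by
  refine ⟨fun ⟨a, ha⟩ => BlockPeriodic.of_buildFrom fun N => ?_, fun hb => ?_⟩
  · set cs := (List.range (N + 1)).map a
    have hlen := length_buildFrom ((List.range m).map (runs V)) cs
    refine ⟨cs, _, ?_, (prefixOf_ofRuns_iff h0 hz).1 ?_⟩
    · simp only [cs, List.length_map, List.length_range] at hlen
      nlinarith
    · rw [ofRuns_buildFrom, ← stage_eq_flatten]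
      exact ha (N + 1)
  · refine ⟨fun j => runs V (m + j * (m + 1)), fun t => ?_⟩
    rw [stage_eq_flatten, ← ofRuns_buildFrom, hb.buildFrom_eq]
    exact prefixOf_ofRuns_runs h0 hz _

theorem mem_AV_iff {v : List Bool} :
    v ∈ AV V ↔ ∃ m, v = ofRuns ((List.range m).map (runs V)) ∧ BlockPeriodic (runs V) (m + 1) := by
  refine ⟨fun ⟨hF, hB⟩ => ?_, fun ⟨m, hv, hb⟩ => ?_⟩
  · obtain ⟨l, rfl⟩ := hF.exists_eq_ofRuns
    have hl := (prefixOf_ofRuns_iff h0 hz).1 hB.prefixOf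
    rw [hl] at hB ⊢
    exact ⟨_, rfl, (builtFrom_ofRuns_runs_iff h0 hz _).1 hB⟩
  · exact hv ▸ ⟨inF_ofRuns _, (builtFrom_ofRuns_runs_iff h0 hz m).2 hb⟩

end RunLengths

theorem exists_generating_sequence_of_infinite_AV {V : ℕ → Bool} (hI : (AV V).Infinite) :
    ∃ v : ℕ → List Bool, v 0 = [false] ∧ (∀ n, FBuiltFrom (v (n + 1)) (v n)) ∧
      ∀ n, PrefixOf (v n) V := by
  obtain ⟨w, hwF, hwB⟩ := hI.nonempty
  have h0 : V 0 = false := hwB.prefixOf.apply_eq (List.head?_eq_getElem? ▸ hwF.1)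
  have hz : {x | V x = false}.Infinite := infinite_setOf_eq_false fun N => by
    obtain ⟨u, ⟨huF, huB⟩, hlen⟩ := (hI.sdiff (List.finite_length_le Bool (N + 1))).nonempty
    exact ⟨u, huB.prefixOf, huF.2, by simpa using hlen⟩
  have hS : {p | BlockPeriodic (runs V) p}.Infinite := by
    refine Set.Infinite.of_image (fun p => ofRuns ((List.range (p - 1)).map (runs V))) (hI.mono ?_)
    intro w hw
    obtain ⟨m, rfl, hm⟩ := (mem_AV_iff h0 hz).1 hw
    exact ⟨m + 1, hm, rfl⟩
  obtain ⟨p, hp0, hp⟩ := exists_dvd_chain (BlockPeriodic.one _) (fun _ hp _ hq => hp.lcm hq) hS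
  have hpos : ∀ n, 0 < p n := fun n => Nat.pos_of_ne_zero fun h => by
    have := (hp n).2
    simp [h] at this
    omega
  refine ⟨fun n => ofRuns ((List.range (p n - 1)).map (runs V)), by simp [hp0, ofRuns],
    fun n => ?_, fun n => prefixOf_ofRuns_runs h0 hz _⟩
  obtain ⟨hper, hdvd, hlt⟩ := hp n
  have hm := Nat.sub_add_cancel (hpos n)
  have hm' := Nat.sub_add_cancel (hpos (n + 1))
  exact BlockPeriodic.fBuiltFrom_ofRuns (by rwa [hm]) (by rwa [hm, hm']) (by omega)

theorem infinite_AV_of_generating_sequence {V : ℕ → Bool} {v : ℕ → List Bool}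
    (hv0 : v 0 = [false]) (hv : ∀ n, FBuiltFrom (v (n + 1)) (v n))
    (hpre : ∀ n, PrefixOf (v n) V) : (AV V).Infinite := by
  choose cs hcs_ne hcs using hv
  let l : ℕ → List ℕ := fun n => Nat.rec [] (fun n l => buildFrom l (cs n)) n
  have hvl : ∀ n, v n = ofRuns (l n) := by
    intro n
    induction n with
    | zero => exact hv0
    | succ n ih => rw [hcs n, ih]; exact (ofRuns_buildFrom _ _).symm
  have hmono : StrictMono fun n => (l n).length :=
    strictMono_nat_of_lt_succ fun n => length_lt_length_buildFrom (l n) (hcs_ne n)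
  have h0 : V 0 = false := (hpre 0).apply_eq (by rw [hv0]; rfl)
  have hz : {x | V x = false}.Infinite := infinite_setOf_eq_false fun N =>
    ⟨v (N + 1), hpre _, hvl _ ▸ getLast?_ofRuns _, by
      rw [hvl, length_ofRuns]
      have : N + 1 ≤ (l (N + 1)).length := hmono.id_le (N + 1)
      omega⟩
  have hlr : ∀ n, l n = (List.range (l n).length).map (runs V) := fun n =>
    (prefixOf_ofRuns_iff h0 hz).1 (hvl n ▸ hpre n)
  refine Set.infinite_of_injective_forall_mem (f := v) (fun a a' h => ?_) fun n => ?_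
  · refine hmono.injective (ofRuns_runs_injective h0 hz ?_)
    simp only
    rw [← hlr, ← hlr, ← hvl, ← hvl, h]
  · rw [mem_AV_iff h0 hz, hvl]
    exact ⟨_, congrArg ofRuns (hlr n),
      BlockPeriodic.of_buildFrom_chain (fun _ => rfl) hcs_ne hlr n⟩

theorem stmt8 (V : ℕ → Bool) :
    (AV V).Infinite ↔
      ∃ v : ℕ → List Bool, v 0 = [false] ∧ (∀ n, FBuiltFrom (v (n + 1)) (v n)) ∧
        ∀ n, PrefixOf (v n) V :=
  ⟨exists_generating_sequence_of_infinite_AV, fun ⟨_, hv0, hv, hpre⟩ =>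
    infinite_AV_of_generating_sequence hv0 hv hpre⟩
end

section
/- If V is a non-periodic rank-one word, then the associated subshift X = {x ∈ {0,1}^ℤ : every finite factor of x is a factor of V} is a perfect subset of {0,1}^ℤ (closed with no isolated points). -/
open Filter Topology

section Occurrences

variable {V : ℕ → Bool} {x : ℤ → Bool} {p u w s : List Bool} {m k : ℕ} {c : ℤ}

theorem prefixOf_iff_occursAt_zero : PrefixOf w V ↔ OccursAt w V 0 := by
  simp [PrefixOf, OccursAt]

theorem OccursAt.infix (h : OccursAt (p ++ w ++ s) V m) : OccursAt w V (m + p.length) := by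
  intro i hi
  have := h (p.length + i) (by simp; omega)
  rwa [List.append_assoc, List.getD_append_right _ _ _ _ (by omega), Nat.add_sub_cancel_left,
    List.getD_append _ _ _ _ hi, ← Nat.add_assoc] at this

theorem OccursAtZ.infix (h : OccursAtZ (p ++ w ++ s) x c) : OccursAtZ w x (c + p.length) := by
  intro i hi
  have := h (p.length + i) (by simp; omega)
  rw [List.append_assoc, List.getD_append_right _ _ _ _ (by omega), Nat.add_sub_cancel_left,
    List.getD_append _ _ _ _ hi] at this
  rw [this]; congr 1; push_cast; ring

theorem OccursAt.eq_take_append_drop (hu : OccursAt u V m) (hw : OccursAt w V (m + k))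
    (hk : k + w.length ≤ u.length) : u = u.take k ++ w ++ u.drop (k + w.length) := by
  have hmid : (u.drop k).take w.length = w := by
    refine List.ext_getElem (by simp; omega) fun i h₁ h₂ => ?_
    have hu' := hu (k + i) (by omega)
    have hw' := hw i h₂
    rw [List.getD_eq_getElem _ _ (by omega)] at hu'
    rw [List.getD_eq_getElem _ _ h₂, Nat.add_assoc] at hw'
    simp [hu', hw']
  calc u = u.take k ++ ((u.drop k).take w.length ++ (u.drop k).drop w.length) := by simp
    _ = u.take k ++ w ++ u.drop (k + w.length) := by
      rw [hmid, List.drop_drop, List.append_assoc, Nat.add_comm]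

end Occurrences

theorem isClopen_setOf_occursAtZ (w : List Bool) (c : ℤ) :
    IsClopen {x : ℤ → Bool | OccursAtZ w x c} := by
  have : {x : ℤ → Bool | OccursAtZ w x c} =
      ⋂ i ∈ Finset.range w.length, (fun x : ℤ → Bool => x (c + i)) ⁻¹' {w.getD i false} := by
    ext x; simp [OccursAtZ, eq_comm]
  rw [this]
  exact isClopen_biInter_finset fun i _ => (isClopen_discrete _).preimage (continuous_apply _)

theorem isClosed_subshift (V : ℕ → Bool) : IsClosed (Subshift V) := by
  simp_rw [Subshift, Set.ofPred_forall]
  refine isClosed_iInter fun w => isClosed_imp ?_ isClosed_const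
  simp_rw [FactorOfZ, Set.ofPred_exists]
  exact isOpen_iUnion fun c => (isClopen_setOf_occursAtZ w c).isOpen

def window (x : ℤ → Bool) (c : ℤ) (n : ℕ) : List Bool := List.ofFn fun t : Fin n => x (c + t)

theorem occursAtZ_window (x : ℤ → Bool) (c : ℤ) (n : ℕ) : OccursAtZ (window x c n) x c := by
  intro i hi
  simp_all [window]

theorem OccursAtZ.eq_of_window {x y : ℤ → Bool} {c : ℤ} {n : ℕ}
    (h : OccursAtZ (window x c n) y c) {i : ℤ} (hci : c ≤ i) (hi : i < c + n) : y i = x i := by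
  obtain ⟨t, rfl⟩ : ∃ t : ℕ, i = c + t := ⟨(i - c).toNat, by omega⟩
  have ht : t < n := by omega
  rw [← h t (by simpa [window] using ht), ← occursAtZ_window x c n t (by simpa [window] using ht)]

theorem exists_window_subset_of_mem_nhds {x : ℤ → Bool} {U : Set (ℤ → Bool)} (hU : U ∈ 𝓝 x) :
    ∃ N : ℕ, {y | OccursAtZ (window x (-N) (2 * N + 1)) y (-N)} ⊆ U := by
  rw [nhds_pi, Filter.mem_pi] at hU
  obtain ⟨I, hI, s, hs, hsU⟩ := hU
  obtain ⟨N, hN⟩ := (hI.image Int.natAbs).bddAbove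
  refine ⟨N, fun y hy => hsU fun i hi => ?_⟩
  have := hN (Set.mem_image_of_mem _ hi)
  rw [OccursAtZ.eq_of_window hy (by omega) (by omega)]
  exact mem_of_mem_nhds (hs i)

theorem exists_mem_subshift_occursAtZ {V : ℕ → Bool} {w : List Bool}
    (hw : ∀ M, ∃ m, M ≤ m ∧ OccursAt w V m) (c : ℤ) :
    ∃ y ∈ Subshift V, OccursAtZ w y c := by
  choose m hm hw using hw
  -- `z j` is `V` shifted so that its occurrence of `w` at `m j` sits at `c`; on the far left,
  -- where the index is negative, `toNat` just repeats `V 0`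
  let z : ℕ → ℤ → Bool := fun j i => V (m j + (i - c)).toNat
  obtain ⟨y, hy⟩ := exists_clusterPt_of_compactSpace (map z atTop)
  refine ⟨y, fun u ⟨k, hk⟩ => ?_, ?_⟩
  · have hfreq : ∃ᶠ j in atTop, OccursAtZ u (z j) k :=
      MapClusterPt.frequently hy ((isClopen_setOf_occursAtZ u k).isOpen.mem_nhds hk)
    obtain ⟨j, hzj, hj⟩ := (hfreq.and_eventually (eventually_ge_atTop (c - k).toNat)).exists
    have := hm j
    refine ⟨(m j + (k - c)).toNat, fun i hi => ?_⟩
    rw [hzj i hi]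
    dsimp only [z]
    congr 1
    omega
  · refine (isClopen_setOf_occursAtZ w c).isClosed.mem_of_mapClusterPt hy
      (Eventually.of_forall fun j i hi => ?_)
    rw [hw j i hi]
    dsimp only [z]
    congr 1
    omega

theorem InF.ne_nil {v : List Bool} (h : InF v) : v ≠ [] := by
  rintro rfl; simp [InF] at h

theorem InF.getD_zero {v : List Bool} (h : InF v) : v.getD 0 false = false := by
  cases v with
  | nil => simp [InF] at h
  | cons b t => simpa [InF] using h.1

section Stages

variable {v : List Bool} {a : ℕ → ℕ} {V : ℕ → Bool}

theorem length_stage_ge (v : List Bool) (a : ℕ → ℕ) (n : ℕ) :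
    (n + 1) * v.length ≤ (stage v a n).length := by
  induction n with
  | zero => simp [stage]
  | succ n ih => rw [stage, List.length_append, List.length_append, Nat.succ_mul]; omega

theorem exists_stage_eq_append (v : List Bool) (a : ℕ → ℕ) (n : ℕ) :
    ∃ u, stage v a n = u ++ v := by
  cases n with
  | zero => exact ⟨[], rfl⟩
  | succ n => exact ⟨stage v a n ++ ones (a n), rfl⟩

theorem stage_succ_of_const {c : ℕ} (hc : ∀ n, a n = c) (n : ℕ) :
    stage v a (n + 1) = v ++ ones c ++ stage v a n := by
  induction n with
  | zero => simp [stage, hc]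
  | succ n ih =>
    conv_lhs => rw [stage, ih]
    rw [stage, hc, hc]; simp

theorem factorOfN_append_ones_append (hpre : ∀ n, PrefixOf (stage v a n) V) (n : ℕ) :
    FactorOfN (v ++ ones (a n) ++ v) V := by
  obtain ⟨u, hu⟩ := exists_stage_eq_append v a n
  have h : OccursAt (stage v a n ++ ones (a n) ++ v) V 0 :=
    prefixOf_iff_occursAt_zero.1 (hpre (n + 1))
  rw [hu] at h
  exact ⟨_, OccursAt.infix (s := []) (by simpa using h)⟩

theorem exists_occursAt_ge_of_stage (hpre : ∀ n, PrefixOf (stage v a n) V) (hv : v ≠ [])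
    (M : ℕ) : ∃ m, M ≤ m ∧ OccursAt v V m := by
  have h := prefixOf_iff_occursAt_zero.1 (hpre (M + 1))
  refine ⟨_, ?_, OccursAt.infix (p := stage v a M ++ ones (a M)) (s := [])
    (by simpa [stage] using h)⟩
  have := length_stage_ge v a M
  have := List.length_pos_iff.2 hv
  simp only [List.length_append, Nat.zero_add]
  nlinarith

theorem periodic_of_const (hpre : ∀ n, PrefixOf (stage v a n) V) (hv : v ≠ []) {c : ℕ}
    (hc : ∀ n, a n = c) (i : ℕ) :
    V (i + (v.length + c)) = V i := by
  have hlen : i < (stage v a i).length := by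
    have := length_stage_ge v a i
    have := List.length_pos_iff.2 hv
    nlinarith
  have hcl : (v ++ ones c).length = v.length + c := by simp [ones]
  rw [← hpre (i + 1) _ (by rw [stage_succ_of_const hc]; simp [ones]; omega),
    ← hpre i i hlen, stage_succ_of_const hc, List.getD_append_right _ _ _ _ (by omega), hcl]
  congr 1
  omega

theorem exists_lt_of_not_periodic (hpre : ∀ n, PrefixOf (stage v a n) V) (hv : v ≠ [])
    (hV : ¬ ∃ p > 0, ∀ i, V (i + p) = V i) :
    ∃ p q, a p < a q := by
  by_contra! h
  have := List.length_pos_iff.2 hv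
  exact hV ⟨v.length + a 0, by omega,
    periodic_of_const hpre hv fun n => le_antisymm (h 0 n) (h n 0)⟩

end Stages

section RankOne

variable {V : ℕ → Bool} {w : List Bool}

theorem exists_mem_AV_le_length (hV : (AV V).Infinite) (L : ℕ) :
    ∃ v ∈ AV V, L ≤ v.length := by
  obtain ⟨v, hv, hvL⟩ := hV.exists_notMem_finite (List.finite_length_le Bool L)
  exact ⟨v, hv, (not_le.1 hvL).le⟩

theorem FactorOfN.exists_mem_AV (hV : (AV V).Infinite) (hw : FactorOfN w V) :
    ∃ v ∈ AV V, ∃ k, k + w.length ≤ v.length ∧ v = v.take k ++ w ++ v.drop (k + w.length) := by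
  obtain ⟨k, hk⟩ := hw
  obtain ⟨v, hv, hlen⟩ := exists_mem_AV_le_length hV (k + w.length)
  refine ⟨v, hv, k, hlen, OccursAt.eq_take_append_drop (m := 0) ?_ (by simpa using hk) hlen⟩
  obtain ⟨-, a, hpre⟩ := hv
  exact prefixOf_iff_occursAt_zero.1 (hpre 0)

theorem FactorOfN.exists_occursAt_ge (hV : (AV V).Infinite) (hw : FactorOfN w V) (M : ℕ) :
    ∃ m, M ≤ m ∧ OccursAt w V m := by
  obtain ⟨v, ⟨hvF, a, hpre⟩, k, hlen, hv⟩ := hw.exists_mem_AV hV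
  obtain ⟨m, hMm, hm⟩ := exists_occursAt_ge_of_stage hpre hvF.ne_nil M
  rw [hv] at hm
  exact ⟨m + k, by omega, by simpa [show k ≤ v.length by omega] using hm.infix⟩

theorem FactorOfN.exists_mem_subshift_ne (hV : (AV V).Infinite)
    (hper : ¬ ∃ p > 0, ∀ i, V (i + p) = V i) (hw : FactorOfN w V) (c : ℤ) (x : ℤ → Bool) :
    ∃ y ∈ Subshift V, OccursAtZ w y c ∧ y ≠ x := by
  obtain ⟨v, ⟨hvF, a, hpre⟩, k, hlen, hv⟩ := hw.exists_mem_AV hV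
  obtain ⟨p, q, hpq⟩ := exists_lt_of_not_periodic hpre hvF.ne_nil hper
  have extend (n : ℕ) : ∃ y ∈ Subshift V, OccursAtZ (v ++ ones (a n) ++ v) y (c - k) :=
    exists_mem_subshift_occursAtZ ((factorOfN_append_ones_append hpre n).exists_occursAt_ge hV) _
  have occurs_w {y : ℤ → Bool} {e : ℕ} (h : OccursAtZ (v ++ ones e ++ v) y (c - k)) :
      OccursAtZ w y c := by
    have h' : OccursAtZ v y (c - k) := by
      simpa using OccursAtZ.infix (p := []) (w := v) (s := ones e ++ v) (by simpa using h)
    rw [hv] at h'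
    simpa [show k ≤ v.length by omega] using h'.infix
  obtain ⟨y₁, hy₁, h₁⟩ := extend p
  obtain ⟨y₂, hy₂, h₂⟩ := extend q
  -- at this position `y₁` reads the leading `0` of `v`, while `y₂` is still inside `1^{a q}`
  have hy₁d : y₁ (c - k + v.length + a p) = false := by
    have := OccursAtZ.infix (p := v ++ ones (a p)) (s := []) (by simpa using h₁) 0
      (List.length_pos_iff.2 hvF.ne_nil)
    rw [hvF.getD_zero] at this
    simpa [ones, add_assoc] using this.symm
  have hy₂d : y₂ (c - k + v.length + a p) = true := by
    have := h₂.infix (a p) (by simpa [ones] using hpq)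
    rw [← this]
    simp [ones, List.getD_eq_getElem?_getD, hpq]
  by_cases hx : y₁ = x
  · exact ⟨y₂, hy₂, occurs_w h₂, fun h => by
      rw [h, ← hx, hy₁d] at hy₂d
      exact Bool.false_ne_true hy₂d⟩
  · exact ⟨y₁, hy₁, occurs_w h₁, hx⟩

end RankOne

theorem stmt11 (V : ℕ → Bool) (h1 : (AV V).Infinite)
    (h2 : ¬ ∃ p > 0, ∀ i, V (i + p) = V i) :
    Perfect (Subshift V) := by
  refine ⟨isClosed_subshift V, fun x hx => accPt_iff_nhds.2 fun U hU => ?_⟩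
  obtain ⟨N, hNU⟩ := exists_window_subset_of_mem_nhds hU
  have hw : FactorOfN (window x (-N) (2 * N + 1)) V := hx _ ⟨_, occursAtZ_window x _ _⟩
  obtain ⟨y, hy, hyw, hyx⟩ := hw.exists_mem_subshift_ne h1 h2 (-N) x
  exact ⟨y, ⟨hNU hyw, hy⟩, hyx⟩
end

section
/- Every infinite periodic binary word starting with 0 is rank-one. -/
/- Let `p` be a period of `V` and `z < p` the last position of a `0` in the first period.
Then for every `k` the prefix `v_k = V[0, z + k p]` begins and ends with `0`, and
`v_k 1^{p-1-z}` has length `(k+1) p`, a period of `V`, so `V = v_k 1^{p-1-z} v_k 1^{p-1-z} ⋯`.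
These prefixes have pairwise different lengths. -/

lemma prefixOf_map_range (V : ℕ → Bool) (n : ℕ) : PrefixOf ((List.range n).map V) V := by
  intro i hi
  simp only [List.length_map, List.length_range] at hi
  simp [hi]

lemma inF_map_range {V : ℕ → Bool} {L : ℕ} (h0 : V 0 = false) (hlast : V L = false) :
    InF ((List.range (L + 1)).map V) := by
  refine ⟨?_, ?_⟩
  · simpa [List.range_succ_eq_map] using h0
  · simpa [List.range_succ] using hlast

lemma stage_map_range {V : ℕ → Bool} {L a : ℕ} (hper : Function.Periodic V (L + a))
    (hones : ∀ i < a, V (L + i) = true) (n : ℕ) :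
    stage ((List.range L).map V) (fun _ => a) n = (List.range (L + n * (L + a))).map V := by
  induction n with
  | zero => simp [stage]
  | succ n ih =>
    set N := L + n * (L + a)
    have hblock : (List.range a).map (fun i => V (N + i)) = ones a := by
      refine List.eq_replicate_iff.mpr ⟨by simp, ?_⟩
      simp only [List.mem_map, List.mem_range]
      rintro _ ⟨i, hi, rfl⟩
      rw [show N + i = L + i + n * (L + a) by ring]
      exact (hper.nat_mul n _).trans (hones i hi)
    have hnext : (List.range L).map (fun i => V (N + a + i)) = (List.range L).map V := by
      refine List.map_congr_left fun i _ => ?_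
      rw [show N + a + i = i + (n + 1) * (L + a) by ring]
      exact hper.nat_mul (n + 1) i
    rw [show L + (n + 1) * (L + a) = N + a + L by ring, List.range_add, List.range_add]
    simp only [List.map_append, List.map_map, Function.comp_def] at hblock hnext ⊢
    rw [stage, ih, hblock, hnext]

lemma builtFrom_map_range {V : ℕ → Bool} {L a : ℕ} (hper : Function.Periodic V (L + a))
    (hones : ∀ i < a, V (L + i) = true) : BuiltFrom V ((List.range L).map V) :=
  ⟨fun _ => a, fun n => stage_map_range hper hones n ▸ prefixOf_map_range V _⟩

lemma exists_last_false_le {V : ℕ → Bool} (h0 : V 0 = false) (p : ℕ) :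
    ∃ z ≤ p, V z = false ∧ ∀ j, z < j → j ≤ p → V j = true := by
  refine ⟨Nat.findGreatest (fun i => V i = false) p, Nat.findGreatest_le p,
    Nat.findGreatest_spec (P := fun i => V i = false) (Nat.zero_le p) h0, fun j hzj hjp => ?_⟩
  simpa using Nat.findGreatest_is_greatest hzj hjp

theorem stmt16 (V : ℕ → Bool) (h : ∃ p > 0, ∀ i, V (i + p) = V i)
    (h0 : V 0 = false) : (AV V).Infinite := by
  obtain ⟨p, hp, hper : Function.Periodic V p⟩ := h
  obtain ⟨z, hzp, hz, hones⟩ := exists_last_false_le h0 (p - 1)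
  refine Set.infinite_of_injective_forall_mem
    (f := fun k => (List.range (z + k * p + 1)).map V) (fun k l hkl => ?_) (fun k => ⟨?_, ?_⟩)
  · have hlen := congrArg List.length hkl
    simp only [List.length_map, List.length_range, add_left_inj, add_right_inj] at hlen
    exact Nat.eq_of_mul_eq_mul_right hp hlen
  · exact inF_map_range h0 ((hper.nat_mul k z).trans hz)
  · refine builtFrom_map_range (a := p - 1 - z) ?_ fun i hi => ?_
    · rw [show z + k * p + 1 + (p - 1 - z) = (k + 1) * p by rw [add_mul]; omega]
      exact hper.nat_mul (k + 1)
    · rw [show z + k * p + 1 + i = z + 1 + i + k * p by ring]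
      exact (hper.nat_mul k _).trans (hones _ (by omega) (by omega))
end

section
/- For every i ∈ ℕ (with the words M_{i,1}, M_{i,2} from the rank-two construction of the Thue–Morse sequence), the longest common prefix of M_{i,1} and M_{i,2} is 0, and the longest common suffix of M_{i,1} and M_{i,2} is 0. -/
/-!
For `i ≥ 1`, `M_{i,1}` begins with `01` and `M_{i,2}` with `00`, because each word begins with its
predecessor. Their last two letters are `10` and `00` in some order, because the recursion makes
`M_{i+1,1}` end with `M_{i,2}` and `M_{i+1,2}` end with `M_{i,1}`. Two different prefixes (suffixes)
of length 2 leave room for a common prefix (suffix) of length at most 1.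
-/

namespace List

variable {α : Type*} {p q w l₁ l₂ : List α}

theorem length_lt_of_prefix_of_prefix_of_ne (hp : p <+: l₁) (hq : q <+: l₂)
    (hlen : p.length = q.length) (hpq : p ≠ q) (h₁ : w <+: l₁) (h₂ : w <+: l₂) :
    w.length < p.length := by
  by_contra! h
  have hpw : p <+: w := prefix_of_prefix_length_le hp h₁ h
  have hqw : q <+: w := prefix_of_prefix_length_le hq h₂ (hlen ▸ h)
  exact hpq ((prefix_of_prefix_length_le hpw hqw hlen.le).eq_of_length hlen)

theorem length_lt_of_suffix_of_suffix_of_ne (hp : p <:+ l₁) (hq : q <:+ l₂)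
    (hlen : p.length = q.length) (hpq : p ≠ q) (h₁ : w <:+ l₁) (h₂ : w <:+ l₂) :
    w.length < p.length := by
  by_contra! h
  have hpw : p <:+ w := suffix_of_suffix_length_le hp h₁ h
  have hqw : q <:+ w := suffix_of_suffix_length_le hq h₂ (hlen ▸ h)
  exact hpq ((suffix_of_suffix_length_le hpw hqw hlen.le).eq_of_length hlen)

end List

theorem M2_prefix_M2_succ (n : ℕ) : (M2 n).1 <+: (M2 (n + 1)).1 ∧ (M2 n).2 <+: (M2 (n + 1)).2 := by
  rw [M2]
  split_ifs <;> simp only [List.append_assoc] <;>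
    exact ⟨List.prefix_append _ _, List.prefix_append _ _⟩

theorem M2_suffix_M2_succ (n : ℕ) : (M2 n).2 <:+ (M2 (n + 1)).1 ∧ (M2 n).1 <:+ (M2 (n + 1)).2 := by
  rw [M2]
  split_ifs <;> exact ⟨List.suffix_append _ _, List.suffix_append _ _⟩

theorem M2_succ_prefixes (n : ℕ) :
    [false, true] <+: (M2 (n + 1)).1 ∧ [false, false] <+: (M2 (n + 1)).2 := by
  induction n with
  | zero => decide
  | succ n ih =>
    obtain ⟨h₁, h₂⟩ := M2_prefix_M2_succ (n + 1)
    exact ⟨ih.1.trans h₁, ih.2.trans h₂⟩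

theorem M2_succ_suffixes (n : ℕ) :
    ∃ a b : Bool, a ≠ b ∧ [a, false] <:+ (M2 (n + 1)).1 ∧ [b, false] <:+ (M2 (n + 1)).2 := by
  induction n with
  | zero => exact ⟨true, false, by decide, by decide, by decide⟩
  | succ n ih =>
    obtain ⟨a, b, hab, s₁, s₂⟩ := ih
    obtain ⟨h₁, h₂⟩ := M2_suffix_M2_succ (n + 1)
    exact ⟨b, a, hab.symm, s₂.trans h₁, s₁.trans h₂⟩

theorem stmt18 : ∀ i,
    ([false] <+: (M2 i).1 ∧ [false] <+: (M2 i).2 ∧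
      ∀ w : List Bool, w <+: (M2 i).1 → w <+: (M2 i).2 → w.length ≤ 1) ∧
    ([false] <:+ (M2 i).1 ∧ [false] <:+ (M2 i).2 ∧
      ∀ w : List Bool, w <:+ (M2 i).1 → w <:+ (M2 i).2 → w.length ≤ 1) := by
  intro i
  cases i with
  | zero =>
    exact ⟨⟨List.prefix_rfl, List.prefix_rfl, fun w h _ => h.length_le⟩,
      List.suffix_rfl, List.suffix_rfl, fun w h _ => h.length_le⟩
  | succ n =>
    obtain ⟨p₁, p₂⟩ := M2_succ_prefixes n
    refine ⟨⟨(List.prefix_append _ _).trans p₁, (List.prefix_append _ _).trans p₂,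
      fun w h₁ h₂ => Nat.le_of_lt_succ
        (List.length_lt_of_prefix_of_prefix_of_ne p₁ p₂ rfl (by decide) h₁ h₂)⟩, ?_⟩
    obtain ⟨a, b, hab, s₁, s₂⟩ := M2_succ_suffixes n
    exact ⟨(List.suffix_append [a] [false]).trans s₁, (List.suffix_append [b] [false]).trans s₂,
      fun w h₁ h₂ => Nat.le_of_lt_succ
        (List.length_lt_of_suffix_of_suffix_of_ne s₁ s₂ rfl (by simp [hab]) h₁ h₂)⟩
end
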